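/- arXiv:2009.01044 — 3 statements merged into one kernel-verified Lean document; each statement's English description precedes it below -/
import Mathlib

section
/- Let G be a locally finite group (every finitely generated subgroup of G is finite). Then LC(G) is a locally nilpotent subgroup of G, i.e. every finitely generated subgroup of LC(G) is nilpotent. -/
/-- `lcmFull G = LCM(G)`: the set of all `x ∈ G` such that `o(xⁿ z)` divides
`lcm(o(xⁿ), o(z))` for all `z ∈ G` and all integers `n`. -/
def lcmFull (G : Type*) [Group G] : Set G :=
  {x : G | ∀ z : G, ∀ n : ℤ, orderOf (x ^ n * z) ∣ Nat.lcm (orderOf (x ^ n)) (orderOf z)}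

/-- `LC G`: the subgroup generated by `LCM(G)`. -/
def LC (G : Type*) [Group G] : Subgroup G := Subgroup.closure (lcmFull G)

section Aux

open Subgroup

variable {G : Type*} [Group G]

lemma lcmFull_zpow {x : G} (hx : x ∈ lcmFull G) (m : ℤ) : x ^ m ∈ lcmFull G := by
  intro z n
  have h := hx z (m * n)
  rwa [zpow_mul] at h

lemma lcmFull_inv {x : G} (hx : x ∈ lcmFull G) : x⁻¹ ∈ lcmFull G := by
  have h := lcmFull_zpow hx (-1)
  rwa [zpow_neg_one] at h

lemma lcmFull_dvd {x : G} (hx : x ∈ lcmFull G) (z : G) :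
    orderOf (x * z) ∣ Nat.lcm (orderOf x) (orderOf z) := by
  have h := hx z 1
  rwa [zpow_one] at h

lemma orderOf_conj (g y : G) : orderOf (g * y * g⁻¹) = orderOf y := by
  have := orderOf_injective (MulAut.conj g).toMonoidHom (MulEquiv.injective _) y
  simpa using this

lemma lcmFull_conj {x : G} (hx : x ∈ lcmFull G) (g : G) : g * x * g⁻¹ ∈ lcmFull G := by
  intro z n
  have e1 : (g * x * g⁻¹) ^ n = g * x ^ n * g⁻¹ := by
    have := map_zpow (MulAut.conj g).toMonoidHom x n
    simp only [MulEquiv.coe_toMonoidHom, MulAut.conj_apply] at this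
    exact this.symm
  have e2 : g * x ^ n * g⁻¹ * z = g * (x ^ n * (g⁻¹ * z * g)) * g⁻¹ := by group
  rw [e1, e2, orderOf_conj, orderOf_conj]
  have := hx (g⁻¹ * z * g) n
  have e3 : orderOf (g⁻¹ * z * g) = orderOf z := by
    have := orderOf_conj g⁻¹ z; simpa using this
  rwa [e3] at this

/-- In any group, a product of `lcmFull` elements of `p`-power order has `p`-power order. -/
lemma orderOf_list_prod_pPow {p : ℕ} (hp : p.Prime) (l : List G)
    (hl : ∀ y ∈ l, y ∈ lcmFull G ∧ ∃ k, orderOf y = p ^ k) :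
    ∃ k, orderOf l.prod = p ^ k := by
  induction l with
  | nil => exact ⟨0, by simp⟩
  | cons s t ih =>
    obtain ⟨⟨hs, a, ha⟩, hrest⟩ : (s ∈ lcmFull G ∧ ∃ k, orderOf s = p ^ k) ∧ _ := by
      constructor
      · exact hl s (by simp)
      · exact ih fun y hy => hl y (by simp [hy])
    obtain ⟨b, hb⟩ := hrest
    have hdvd : orderOf (s * t.prod) ∣ p ^ (a + b) := by
      refine (lcmFull_dvd hs t.prod).trans ?_
      refine Nat.lcm_dvd ?_ ?_
      · rw [ha]; exact pow_dvd_pow p (Nat.le_add_right a b)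
      · rw [hb]; exact pow_dvd_pow p (Nat.le_add_left b a)
    obtain ⟨k, _, hk⟩ := (Nat.dvd_prime_pow hp).mp hdvd
    exact ⟨k, by simpa using hk⟩

/-- The subgroup generated by the `lcmFull` elements of `p`-power order. -/
def pPart (G : Type*) [Group G] (p : ℕ) : Subgroup G :=
  Subgroup.closure {x : G | x ∈ lcmFull G ∧ ∃ k, orderOf x = p ^ k}

lemma pPart_orderOf {p : ℕ} (hp : p.Prime) {g : G} (hg : g ∈ pPart G p) :
    ∃ k, orderOf g = p ^ k := by
  set T : Set G := {x : G | x ∈ lcmFull G ∧ ∃ k, orderOf x = p ^ k} with hT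
  have hsub : T ∪ T⁻¹ ⊆ T := by
    rintro y (hy | hy)
    · exact hy
    · obtain ⟨h1, k, h2⟩ := hy
      exact ⟨by simpa using lcmFull_inv h1, k, by simpa using h2⟩
  have hg' : g ∈ Submonoid.closure T := by
    have h1 : g ∈ (Subgroup.closure T).toSubmonoid := hg
    rw [Subgroup.closure_toSubmonoid] at h1
    exact Submonoid.closure_mono hsub h1
  obtain ⟨l, hl, rfl⟩ := Submonoid.exists_list_of_mem_closure hg'
  exact orderOf_list_prod_pPow hp l fun y hy => hl y hy

lemma pPart_normal (p : ℕ) : (pPart G p).Normal := by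
  constructor
  intro x hx g
  set T : Set G := {x : G | x ∈ lcmFull G ∧ ∃ k, orderOf x = p ^ k} with hT
  have : (MulAut.conj g).toMonoidHom x ∈ (Subgroup.closure T).map (MulAut.conj g).toMonoidHom :=
    Subgroup.mem_map_of_mem _ hx
  rw [MonoidHom.map_closure] at this
  have hle : Subgroup.closure ((MulAut.conj g).toMonoidHom '' T) ≤ Subgroup.closure T := by
    refine Subgroup.closure_le _ |>.mpr ?_
    rintro _ ⟨y, ⟨hy1, k, hy2⟩, rfl⟩
    refine Subgroup.subset_closure ?_
    refine ⟨by simpa using lcmFull_conj hy1 g, k, ?_⟩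
    simpa [orderOf_conj] using hy2
  have := hle this
  simpa [pPart] using this

lemma pPart_isPGroup {p : ℕ} (hp : p.Prime) : IsPGroup p (pPart G p) := by
  intro g
  obtain ⟨k, hk⟩ := pPart_orderOf hp g.2
  refine ⟨k, ?_⟩
  have h : orderOf g = p ^ k := by rw [← Subgroup.orderOf_coe, hk]
  rw [← h]
  exact pow_orderOf_eq_one g

lemma pPart_disjoint {p q : ℕ} (hp : p.Prime) (hq : q.Prime) (hpq : p ≠ q) :
    Disjoint (pPart G p) (pPart G q) := by
  rw [Subgroup.disjoint_def]
  intro x hxp hxq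
  obtain ⟨k, hk⟩ := pPart_orderOf hp hxp
  obtain ⟨l, hl⟩ := pPart_orderOf hq hxq
  rcases Nat.eq_zero_or_pos k with rfl | hkpos
  · rw [← orderOf_eq_one_iff, hk, pow_zero]
  · exfalso
    apply hpq
    have hdvd : p ∣ q ^ l := by
      rw [← hl, hk]
      exact dvd_pow_self p hkpos.ne'
    exact (Nat.prime_dvd_prime_iff_eq hp hq).mp (hp.dvd_of_dvd_pow hdvd)

/-- Decomposition of an `lcmFull` element into prime-power parts. -/
lemma lcmFull_mem_iSup_pPart [Finite G] {x : G} (hx : x ∈ lcmFull G) :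
    x ∈ ⨆ (i : (Nat.card G).primeFactors), pPart G (i : ℕ) := by
  generalize hn : orderOf x = n
  induction n using Nat.strong_induction_on generalizing x with
  | _ n ih =>
  rcases eq_or_ne n 1 with rfl | hn1
  · have : x = 1 := orderOf_eq_one_iff.mp hn
    rw [this]; exact one_mem _
  have hn0 : n ≠ 0 := by
    rw [← hn]; exact (orderOf_pos x).ne'
  set p := n.minFac with hpdef
  have hp : p.Prime := Nat.minFac_prime hn1
  set a := n.factorization p with hadef
  set m := ordCompl[p] n with hmdef
  have hmul : p ^ a * m = n := Nat.ordProj_mul_ordCompl_eq_self n p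
  have hmpos : 0 < m := Nat.ordCompl_pos p hn0
  have hapos : 0 < a := by
    rw [hadef]
    exact (Nat.Prime.factorization_pos_of_dvd hp hn0 n.minFac_dvd)
  have hmlt : m < n := by
    have h1 : 1 < p ^ a := Nat.one_lt_pow hapos.ne' hp.one_lt
    rw [← hmul]
    simpa using mul_lt_mul_of_pos_right h1 hmpos
  have hcop : Nat.Coprime (p ^ a) m := (Nat.coprime_ordCompl hp hn0).pow_left a
  -- Bezout
  have hbez : ∃ u v : ℤ, u * (p ^ a : ℕ) + v * (m : ℕ) = 1 := by
    have : IsCoprime ((p ^ a : ℕ) : ℤ) ((m : ℕ) : ℤ) := by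
      rw [Int.isCoprime_iff_gcd_eq_one, Int.gcd_natCast_natCast]
      exact hcop
    obtain ⟨u, v, huv⟩ := this
    exact ⟨u, v, huv⟩
  obtain ⟨u, v, huv⟩ := hbez
  have hxn : x ^ (n : ℤ) = 1 := by
    rw [← hn, zpow_natCast, pow_orderOf_eq_one]
  set y := x ^ (v * (m : ℤ)) with hydef
  set w := x ^ (u * ((p ^ a : ℕ) : ℤ)) with hwdef
  have hyx : y ∈ lcmFull G := lcmFull_zpow hx _
  have hwx : w ∈ lcmFull G := lcmFull_zpow hx _
  have hsplit : x = y * w := by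
    have he : (v * (m : ℤ)) + (u * ((p ^ a : ℕ) : ℤ)) = 1 := by linear_combination huv
    rw [hydef, hwdef, ← zpow_add, he, zpow_one]
  -- y has p-power order
  have hyord : orderOf y ∣ p ^ a := by
    rw [orderOf_dvd_iff_pow_eq_one, hydef, ← zpow_natCast, ← zpow_mul]
    have : v * (m : ℤ) * (((p ^ a : ℕ)) : ℤ) = (n : ℤ) * v := by
      rw [← hmul]; push_cast; ring
    rw [this, zpow_mul, hxn, one_zpow]
  -- w has order dividing m (A)
  have hword : orderOf w ∣ m := by
    rw [orderOf_dvd_iff_pow_eq_one, hwdef, ← zpow_natCast, ← zpow_mul]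
    have : u * (((p ^ a : ℕ)) : ℤ) * (m : ℤ) = (n : ℤ) * u := by
      rw [← hmul]; push_cast; ring
    rw [this, zpow_mul, hxn, one_zpow]
  rw [hsplit]
  refine mul_mem ?_ ?_
  · -- y is in the p-part
    have hpmem : p ∈ (Nat.card G).primeFactors := by
      rw [Nat.mem_primeFactors]
      refine ⟨hp, ?_, Nat.card_pos.ne'⟩
      calc p ∣ n := n.minFac_dvd
      _ ∣ Nat.card G := by rw [← hn]; exact orderOf_dvd_natCard x
    refine Subgroup.mem_iSup_of_mem (⟨p, hpmem⟩ : (Nat.card G).primeFactors) ?_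
    obtain ⟨k, _, hk⟩ := (Nat.dvd_prime_pow hp).mp hyord
    exact Subgroup.subset_closure ⟨hyx, k, hk⟩
  · -- induction on w
    exact ih (orderOf w) (lt_of_le_of_lt (Nat.le_of_dvd hmpos hword) hmlt) hwx rfl

/-- A finite group generated by a subset of `lcmFull` is nilpotent. -/
lemma nilpotent_of_closure_lcmFull {K : Type*} [Group K] [Finite K] (S : Set K)
    (hS : S ⊆ lcmFull K) (htop : Subgroup.closure S = ⊤) : Group.IsNilpotent K := by
  classical
  set ι := (Nat.card K).primeFactors with hι
  have hprime : ∀ i : ι, (i : ℕ).Prime := fun i => Nat.prime_of_mem_primeFactors i.2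
  have hnorm : ∀ i : ι, (pPart K (i : ℕ)).Normal := fun i => pPart_normal _
  have hcomm : Pairwise fun i j : ι => ∀ x y : K,
      x ∈ pPart K (i : ℕ) → y ∈ pPart K (j : ℕ) → Commute x y := by
    intro i j hij x y hx hy
    refine Subgroup.commute_of_normal_of_disjoint _ _ (hnorm i) (hnorm j) ?_ x y hx hy
    exact pPart_disjoint (hprime i) (hprime j) (fun h => hij (Subtype.ext h))
  have hsup : (⨆ i : ι, pPart K (i : ℕ)) = ⊤ := by
    rw [eq_top_iff, ← htop]
    refine (Subgroup.closure_le _).mpr ?_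
    intro s hs
    exact lcmFull_mem_iSup_pPart (hS hs)
  have hsurj : Function.Surjective (Subgroup.noncommPiCoprod hcomm) := by
    rw [← MonoidHom.range_eq_top, Subgroup.noncommPiCoprod_range, hsup]
  haveI : ∀ i : ι, Group.IsNilpotent (pPart K (i : ℕ)) := by
    intro i
    haveI : Fact (i : ℕ).Prime := ⟨hprime i⟩
    exact IsPGroup.isNilpotent (pPart_isPGroup (hprime i))
  exact nilpotent_of_surjective _ hsurj

end Aux

/-- If `G` is a locally finite group (every finitely generated subgroup is finite),
then `LC(G)` is a locally nilpotent subgroup of `G`: every finitely generated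
subgroup of `G` contained in `LC(G)` is nilpotent. -/
theorem LC_locally_nilpotent (G : Type*) [Group G]
    (hlf : ∀ H : Subgroup G, H.FG → Finite H) :
    ∀ H : Subgroup G, H ≤ LC G → H.FG → Group.IsNilpotent H := by
  intro H hle hFG
  classical
  obtain ⟨T, hTc, hTfin⟩ := (Subgroup.fg_iff H).mp hFG
  -- every element of LC G lies in the closure of a finite subset of lcmFull G
  have hLC : ∀ g ∈ LC G, ∃ F : Set G, F.Finite ∧ F ⊆ lcmFull G ∧ g ∈ Subgroup.closure F := by
    intro g hg
    refine Subgroup.closure_induction ?_ ?_ ?_ ?_ hg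
    · intro x hx
      exact ⟨{x}, Set.finite_singleton x, Set.singleton_subset_iff.mpr hx,
        Subgroup.mem_closure_singleton_self x⟩
    · exact ⟨∅, Set.finite_empty, Set.empty_subset _, Subgroup.one_mem _⟩
    · rintro x y _ _ ⟨F₁, h1, h2, h3⟩ ⟨F₂, h4, h5, h6⟩
      refine ⟨F₁ ∪ F₂, h1.union h4, Set.union_subset h2 h5, ?_⟩
      exact Subgroup.mul_mem _ (Subgroup.closure_mono Set.subset_union_left h3)
        (Subgroup.closure_mono Set.subset_union_right h6)
    · rintro x _ ⟨F, h1, h2, h3⟩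
      exact ⟨F, h1, h2, Subgroup.inv_mem _ h3⟩
  have hchoice : ∀ t : T, ∃ F : Set G, F.Finite ∧ F ⊆ lcmFull G ∧ (t : G) ∈ Subgroup.closure F := by
    intro t
    refine hLC t (hle ?_)
    rw [← hTc]
    exact Subgroup.subset_closure t.2
  choose F hfin hsub hmem using hchoice
  haveI := hTfin.to_subtype
  set S : Set G := ⋃ t : T, F t with hSdef
  have hSfin : S.Finite := Set.finite_iUnion hfin
  have hSsub : S ⊆ lcmFull G := Set.iUnion_subset hsub
  have hHK : H ≤ Subgroup.closure S := by
    rw [← hTc]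
    refine (Subgroup.closure_le _).mpr ?_
    intro t ht
    exact Subgroup.closure_mono (Set.subset_iUnion F ⟨t, ht⟩) (hmem ⟨t, ht⟩)
  haveI : Finite (Subgroup.closure S) :=
    hlf _ ((Subgroup.fg_iff _).mpr ⟨S, rfl, hSfin⟩)
  set S' : Set (Subgroup.closure S) := (Subtype.val) ⁻¹' S with hS'
  have htop : Subgroup.closure S' = ⊤ := Subgroup.closure_closure_coe_preimage
  have hS'sub : S' ⊆ lcmFull (Subgroup.closure S) := by
    rintro ⟨x, hxK⟩ hx z n
    have h := hSsub hx (↑z) n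
    simpa only [← Subgroup.orderOf_coe, Subgroup.coe_mul, SubgroupClass.coe_zpow] using h
  haveI hnilK : Group.IsNilpotent (Subgroup.closure S) :=
    nilpotent_of_closure_lcmFull S' hS'sub htop
  have e := Subgroup.subgroupOfEquivOfLe hHK
  exact nilpotent_of_surjective e.toMonoidHom e.surjective
end

section
/- Let G and H be finite groups with gcd(|H|, |G|) = 1. Then Deg(H × G) = (Deg(G) − |G|)·(Deg(H) − |H|) + |H|·|G|. -/
/-- The degree of a vertex `g` in the LCM-graph of `G`: `g` is adjacent to `y` exactly
when `o(gy) ∣ lcm(o(g), o(y))`, and the loop at `g` contributes `2` to the degree. -/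
noncomputable def degLCM {G : Type*} [Group G] (g : G) : ℕ :=
  1 + Nat.card {y : G // orderOf (g * y) ∣ Nat.lcm (orderOf g) (orderOf y)}

/-- `Deg G`: the sum of the degrees of all vertices of the LCM-graph of `G`. -/
noncomputable def DegLCM (G : Type*) [Group G] : ℕ := ∑ᶠ g : G, degLCM g


section
set_option linter.unusedSectionVars false
variable {G H : Type*} [Group G] [Finite G] [Group H] [Finite H]

/-- number of non-loop neighbors -/
noncomputable def dLCM {G : Type*} [Group G] (g : G) : ℕ :=
  Nat.card {y : G // orderOf (g * y) ∣ Nat.lcm (orderOf g) (orderOf y)}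

lemma adj_prod_iff (hco : Nat.Coprime (Nat.card H) (Nat.card G))
    (h h' : H) (g g' : G) :
    orderOf ((h, g) * (h', g')) ∣ Nat.lcm (orderOf (h, g)) (orderOf (h', g')) ↔
      orderOf (h * h') ∣ Nat.lcm (orderOf h) (orderOf h') ∧
      orderOf (g * g') ∣ Nat.lcm (orderOf g) (orderOf g') := by
  have hH : ∀ x : H, orderOf x ∣ Nat.card H := fun x => orderOf_dvd_natCard x
  have hG : ∀ x : G, orderOf x ∣ Nat.card G := fun x => orderOf_dvd_natCard x
  set a := orderOf (h * h')
  set b := orderOf (g * g')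
  set L := Nat.lcm (orderOf h) (orderOf h')
  set M := Nat.lcm (orderOf g) (orderOf g')
  have hLH : L ∣ Nat.card H := Nat.lcm_dvd (hH h) (hH h')
  have hMG : M ∣ Nat.card G := Nat.lcm_dvd (hG g) (hG g')
  have haco : Nat.Coprime a M := Nat.Coprime.coprime_dvd_right hMG
    (Nat.Coprime.coprime_dvd_left (hH _) hco)
  have hbco : Nat.Coprime b L := Nat.Coprime.coprime_dvd_right hLH
    (Nat.Coprime.coprime_dvd_left (hG _) hco.symm)
  have h1 : orderOf ((h, g) * (h', g')) = Nat.lcm a b := by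
    simp [Prod.mk_mul_mk, Prod.orderOf_mk]
    rfl
  have h2 : Nat.lcm (orderOf (h, g)) (orderOf (h', g')) = Nat.lcm L M := by
    rw [Prod.orderOf_mk, Prod.orderOf_mk]
    apply Nat.dvd_antisymm
    · apply Nat.lcm_dvd <;> apply Nat.lcm_dvd
      · exact (Nat.dvd_lcm_left _ _).trans (Nat.dvd_lcm_left _ _)
      · exact (Nat.dvd_lcm_left _ _).trans (Nat.dvd_lcm_right _ _)
      · exact (Nat.dvd_lcm_right _ _).trans (Nat.dvd_lcm_left _ _)
      · exact (Nat.dvd_lcm_right _ _).trans (Nat.dvd_lcm_right _ _)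
    · apply Nat.lcm_dvd <;> apply Nat.lcm_dvd
      · exact (Nat.dvd_lcm_left _ _).trans (Nat.dvd_lcm_left _ _)
      · exact (Nat.dvd_lcm_left _ _).trans (Nat.dvd_lcm_right _ _)
      · exact (Nat.dvd_lcm_right _ _).trans (Nat.dvd_lcm_left _ _)
      · exact (Nat.dvd_lcm_right _ _).trans (Nat.dvd_lcm_right _ _)
  rw [h1, h2, Nat.lcm_dvd_iff]
  constructor
  · rintro ⟨ha, hb⟩
    refine ⟨?_, ?_⟩
    · have : a ∣ L * M := ha.trans (Nat.lcm_dvd_mul L M)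
      exact (Nat.Coprime.dvd_of_dvd_mul_right haco this)
    · have : b ∣ M * L := hb.trans (by rw [Nat.lcm_comm]; exact Nat.lcm_dvd_mul M L)
      exact (Nat.Coprime.dvd_of_dvd_mul_right hbco this)
  · rintro ⟨ha, hb⟩
    exact ⟨ha.trans (Nat.dvd_lcm_left L M), hb.trans (Nat.dvd_lcm_right L M)⟩

lemma dLCM_prod (hco : Nat.Coprime (Nat.card H) (Nat.card G)) (h : H) (g : G) :
    dLCM ((h, g) : H × G) = dLCM h * dLCM g := by
  rw [dLCM, dLCM, dLCM, ← Nat.card_prod]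
  apply Nat.card_congr
  refine (Equiv.subtypeEquivRight ?_).trans Equiv.subtypeProdEquivProd
  rintro ⟨y1, y2⟩
  exact adj_prod_iff hco h y1 g y2

end

set_option linter.unusedSectionVars false

lemma DegLCM_eq (K : Type*) [Group K] [Fintype K] :
    DegLCM K = Fintype.card K + ∑ k : K, dLCM k := by
  rw [DegLCM, finsum_eq_sum_of_fintype]
  simp only [degLCM, dLCM, Finset.sum_add_distrib, Finset.sum_const, Finset.card_univ,
    smul_eq_mul, mul_one]

/-- For finite groups `G` and `H` of coprime orders,
`Deg(H × G) = (Deg(G) − |G|)·(Deg(H) − |H|) + |H|·|G|` (as integers). -/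
theorem DegLCM_prod_eq_of_coprime (G H : Type*) [Group G] [Finite G] [Group H] [Finite H]
    (hco : Nat.Coprime (Nat.card H) (Nat.card G)) :
    (DegLCM (H × G) : ℤ) =
      ((DegLCM G : ℤ) - Nat.card G) * ((DegLCM H : ℤ) - Nat.card H)
        + (Nat.card H : ℤ) * Nat.card G := by
  have : Fintype G := Fintype.ofFinite G
  have : Fintype H := Fintype.ofFinite H
  rw [DegLCM_eq, DegLCM_eq, DegLCM_eq]
  have hsum : ∑ k : H × G, dLCM k = (∑ h : H, dLCM h) * (∑ g : G, dLCM g) := by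
    rw [Fintype.sum_prod_type, Finset.sum_mul_sum]
    exact Finset.sum_congr rfl fun h _ => Finset.sum_congr rfl fun g _ => dLCM_prod hco h g
  rw [hsum]
  rw [Nat.card_eq_fintype_card, Nat.card_eq_fintype_card, Fintype.card_prod]
  push_cast
  ring
end

section
/- Let H and G be finite groups of the same order n, and let A be a finite group with gcd(|A|, n) = 1. Then Deg(A × H) ≤ Deg(A × G) if and only if Deg(H) ≤ Deg(G). -/
/-- Number of neighbours (with the loop counted once). -/
noncomputable def NL {G : Type*} [Group G] (g : G) : ℕ :=
  Nat.card {y : G // orderOf (g * y) ∣ Nat.lcm (orderOf g) (orderOf y)}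

lemma degLCM_eq_NL {G : Type*} [Group G] (g : G) : degLCM g = 1 + NL g := rfl

lemma NL_pos {G : Type*} [Group G] [Finite G] (g : G) : 0 < NL g := by
  have : Nonempty {y : G // orderOf (g * y) ∣ Nat.lcm (orderOf g) (orderOf y)} :=
    ⟨⟨g⁻¹, by simp⟩⟩
  exact Nat.card_pos

lemma lcm_lcm_swap (a b c d : ℕ) :
    Nat.lcm (Nat.lcm a c) (Nat.lcm b d) = Nat.lcm (Nat.lcm a b) (Nat.lcm c d) := by
  rw [Nat.lcm_assoc, Nat.lcm_assoc, ← Nat.lcm_assoc c, ← Nat.lcm_assoc b, Nat.lcm_comm c b]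

lemma NL_prod {A G : Type*} [Group A] [Finite A] [Group G] [Finite G]
    (hco : Nat.Coprime (Nat.card A) (Nat.card G)) (a : A) (g : G) :
    NL (a, g) = NL a * NL g := by
  rw [NL, NL, NL, ← Nat.card_prod]
  apply Nat.card_congr
  refine (Equiv.subtypeEquivRight ?_).trans Equiv.subtypeProdEquivProd
  rintro ⟨b, h⟩
  simp only [Prod.mk_mul_mk, Prod.orderOf]
  constructor
  · intro hd
    rw [lcm_lcm_swap] at hd
    have hdm : Nat.lcm (orderOf (a * b)) (orderOf (g * h)) ∣
        Nat.lcm (orderOf a) (orderOf b) * Nat.lcm (orderOf g) (orderOf h) :=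
      hd.trans (Nat.lcm_dvd_mul _ _)
    have hA : Nat.lcm (orderOf a) (orderOf b) ∣ Nat.card A :=
      Nat.lcm_dvd (orderOf_dvd_natCard a) (orderOf_dvd_natCard b)
    have hG : Nat.lcm (orderOf g) (orderOf h) ∣ Nat.card G :=
      Nat.lcm_dvd (orderOf_dvd_natCard g) (orderOf_dvd_natCard h)
    constructor
    · have hcop : Nat.Coprime (orderOf (a * b)) (Nat.lcm (orderOf g) (orderOf h)) :=
        (hco.coprime_dvd_left (orderOf_dvd_natCard (a * b))).coprime_dvd_right hG
      exact hcop.dvd_of_dvd_mul_right ((Nat.dvd_lcm_left _ _).trans hdm)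
    · have hcop : Nat.Coprime (orderOf (g * h)) (Nat.lcm (orderOf a) (orderOf b)) :=
        (hco.symm.coprime_dvd_left (orderOf_dvd_natCard (g * h))).coprime_dvd_right hA
      exact hcop.dvd_of_dvd_mul_left ((Nat.dvd_lcm_right _ _).trans hdm)
  · rintro ⟨h1, h2⟩
    rw [lcm_lcm_swap]
    exact Nat.lcm_dvd (h1.trans (Nat.dvd_lcm_left _ _)) (h2.trans (Nat.dvd_lcm_right _ _))

lemma DegLCM_eq_s18 {G : Type*} [Group G] [Finite G] :
    DegLCM G = Nat.card G + ∑ᶠ g : G, NL g := by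
  have : Fintype G := Fintype.ofFinite G
  simp only [DegLCM, finsum_eq_sum_of_fintype, degLCM_eq_NL, Finset.sum_add_distrib,
    Finset.sum_const, Finset.card_univ, smul_eq_mul, mul_one, Nat.card_eq_fintype_card]

lemma sum_NL_prod {A G : Type*} [Group A] [Finite A] [Group G] [Finite G]
    (hco : Nat.Coprime (Nat.card A) (Nat.card G)) :
    (∑ᶠ p : A × G, NL p) = (∑ᶠ a : A, NL a) * ∑ᶠ g : G, NL g := by
  have : Fintype A := Fintype.ofFinite A
  have : Fintype G := Fintype.ofFinite G
  simp only [finsum_eq_sum_of_fintype, Finset.sum_mul_sum, ← NL_prod hco,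
    Fintype.sum_prod_type]

lemma sum_NL_pos {A : Type*} [Group A] [Finite A] : 0 < ∑ᶠ a : A, NL a := by
  have : Fintype A := Fintype.ofFinite A
  rw [finsum_eq_sum_of_fintype]
  exact Finset.sum_pos (fun i _ => NL_pos i) Finset.univ_nonempty

/-- Let `H` and `G` be finite groups of the same order `n` and let `A` be a finite
group with `gcd(|A|, n) = 1`. Then `Deg(A × H) ≤ Deg(A × G) ↔ Deg(H) ≤ Deg(G)`. -/
theorem DegLCM_prod_le_iff (G H A : Type*) [Group G] [Finite G] [Group H] [Finite H]
    [Group A] [Finite A] (hcard : Nat.card H = Nat.card G)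
    (hco : Nat.Coprime (Nat.card A) (Nat.card G)) :
    DegLCM (A × H) ≤ DegLCM (A × G) ↔ DegLCM H ≤ DegLCM G := by
  have hcoH : Nat.Coprime (Nat.card A) (Nat.card H) := by rw [hcard]; exact hco
  rw [DegLCM_eq_s18 (G := A × H), DegLCM_eq_s18 (G := A × G), DegLCM_eq_s18 (G := H), DegLCM_eq_s18 (G := G),
    sum_NL_prod hcoH, sum_NL_prod hco, Nat.card_prod, Nat.card_prod, hcard,
    add_le_add_iff_left, add_le_add_iff_left]
  exact mul_le_mul_iff_right₀ (sum_NL_pos (A := A))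
end
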